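/- arXiv:1405.0621 — 2 statements merged into one kernel-verified Lean document; each statement's English description precedes it below -/
import Mathlib

section
/- Let 1 < q < p < r and let μ > 0. If Λ > μ^((r−q)/(r−p)) · (r−p) · ((p−q)^(p−q)/(r−q)^(r−q))^(1/(r−p)), then for every t > 0 we have Λ·t^(q−1) + t^(r−1) > μ·t^(p−1). -/
open Real

theorem nonlinearity_above_eigen (q p r μ Λ : ℝ) (hq : 1 < q) (hqp : q < p) (hpr : p < r)
    (hμ : 0 < μ) (hΛpos : 0 < Λ)
    (hΛ : Λ > μ ^ ((r - q) / (r - p)) * (r - p)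
        * ((p - q) ^ (p - q) / (r - q) ^ (r - q)) ^ ((1:ℝ) / (r - p))) :
    ∀ t : ℝ, 0 < t → Λ * t ^ (q - 1) + t ^ (r - 1) > μ * t ^ (p - 1) := by
  intro t ht
  have ha : (0:ℝ) < p - q := by linarith
  have hd : (0:ℝ) < r - p := by linarith
  have hb : (0:ℝ) < r - q := by linarith
  set a := p - q with ha'
  set b := r - q with hb'
  set d := r - p with hd'
  have hab : a + d = b := by rw [ha', hb', hd']; ring
  have hw : a / b + d / b = 1 := by field_simp; linarith
  have htb : (0:ℝ) ≤ t ^ b := (rpow_pos_of_pos ht b).le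
  have hp2 : (0:ℝ) ≤ μ ^ (b/d) * (a/b) ^ (a/d) :=
    mul_nonneg (rpow_pos_of_pos hμ (b/d)).le (rpow_pos_of_pos (div_pos ha hb) (a/d)).le
  have key := Real.geom_mean_le_arith_mean2_weighted
    (div_nonneg ha.le hb.le) (div_nonneg hd.le hb.le)
    (mul_nonneg (div_nonneg hb.le ha.le) htb) hp2 hw
  have h1 : ((b/a) * t ^ b) ^ (a/b) = (b/a) ^ (a/b) * t ^ a := by
    rw [mul_rpow (div_pos hb ha).le htb, ← rpow_mul ht.le,
      show b * (a/b) = a by field_simp]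
  have h2 : (μ ^ (b/d) * (a/b) ^ (a/d)) ^ (d/b) = μ * (a/b) ^ (a/b) := by
    rw [mul_rpow (rpow_pos_of_pos hμ (b/d)).le (rpow_pos_of_pos (div_pos ha hb) (a/d)).le,
      ← rpow_mul hμ.le, ← rpow_mul (div_pos ha hb).le,
      show b/d * (d/b) = 1 by field_simp,
      show a/d * (d/b) = a/b by rw [div_mul_div_comm]; rw [mul_comm d b]; rw [mul_div_mul_right _ _ hd.ne'],
      rpow_one]
  have h3 : (b/a) ^ (a/b) * (a/b) ^ (a/b) = 1 := by
    rw [← mul_rpow (div_pos hb ha).le (div_pos ha hb).le,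
      show b/a * (a/b) = 1 by field_simp, one_rpow]
  have hgm : ((b/a) * t ^ b) ^ (a/b) * (μ ^ (b/d) * (a/b) ^ (a/d)) ^ (d/b) = μ * t ^ a := by
    rw [h1, h2]
    calc (b/a) ^ (a/b) * t ^ a * (μ * (a/b) ^ (a/b))
        = ((b/a) ^ (a/b) * (a/b) ^ (a/b)) * (μ * t ^ a) := by ring
      _ = μ * t ^ a := by rw [h3, one_mul]
  have ham : a/b * ((b/a) * t ^ b) = t ^ b := by
    field_simp
  rw [hgm, ham] at key
  -- identify the critical constant
  have hM : d/b * (μ ^ (b/d) * (a/b) ^ (a/d))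
      = μ ^ (b/d) * d * (a ^ a / b ^ b) ^ ((1:ℝ)/d) := by
    have e1 : (a ^ a / b ^ b) ^ ((1:ℝ)/d) = a ^ (a/d) / b ^ (b/d) := by
      rw [div_rpow (rpow_pos_of_pos ha a).le (rpow_pos_of_pos hb b).le,
        ← rpow_mul ha.le, ← rpow_mul hb.le]
      rw [show a * (1/d) = a/d by ring, show b * (1/d) = b/d by ring]
    have e2 : b ^ (b/d) = b ^ (a/d) * b := by
      rw [show b/d = a/d + 1 by rw [← hab]; field_simp, rpow_add hb, rpow_one]
    rw [e1, e2, div_rpow ha.le hb.le]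
    field_simp
  rw [hM] at key
  -- so μ * t ^ a ≤ t ^ b + M < t ^ b + Λ
  have hlt : μ * t ^ a < t ^ b + Λ := by
    rcases key with key
    calc μ * t ^ a ≤ t ^ b + μ ^ (b/d) * d * (a ^ a / b ^ b) ^ ((1:ℝ)/d) := key
      _ < t ^ b + Λ := by
          have := hΛ
          linarith [hΛ]
  -- multiply by t ^ (q-1)
  have htq : (0:ℝ) < t ^ (q - 1) := rpow_pos_of_pos ht _
  have e3 : μ * t ^ (p - 1) = (μ * t ^ a) * t ^ (q - 1) := by
    rw [ha', mul_assoc, ← rpow_add ht]; ring_nf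
  have e4 : t ^ (r - 1) = t ^ b * t ^ (q - 1) := by
    rw [hb', ← rpow_add ht]; ring_nf
  rw [e3, e4]
  calc (μ * t ^ a) * t ^ (q-1) < (t ^ b + Λ) * t ^ (q-1) := by
        exact (mul_lt_mul_of_pos_right hlt htq)
    _ = Λ * t ^ (q-1) + t ^ b * t ^ (q-1) := by ring
end

section
/- Let 1 < p < r and λ₁ > 0, and suppose Λ : (1,p) → ℝ satisfies, for each q ∈ (1,p), the bounds λ₁^((r−q)/(r−p))·(r−p)·((p−q)^(p−q)/(r−q)^(r−q))^(1/(r−p))·c(q)^(q−p) ≤ Λ(q) ≤ λ₁^((r−q)/(r−p))·(r−p)·((p−q)^(p−q)/(r−q)^(r−q))^(1/(r−p)), where c : (1,p) → (0,∞) satisfies c(q)^(p−q) → 1 as q → p⁻. Then Λ(q) → λ₁ as q → p⁻. -/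
/-! The upper bound is a continuous function of `q` up to `q = p` once `(p - q) ^ (p - q)` is
read as `x ^ x → 1` for `x → 0⁺`, and at `q = p` it equals `λ₁`. The lower bound is the upper
bound times `c q ^ (q - p) = (c q ^ (p - q))⁻¹ → 1`, so `Λ` is squeezed to `λ₁`. -/

open Real Set Filter Topology

theorem Real.tendsto_rpow_self_nhdsGT_zero : Tendsto (fun x : ℝ => x ^ x) (𝓝[>] 0) (𝓝 1) := by
  have h : Tendsto (fun x : ℝ => exp (x * log x)) (𝓝 0) (𝓝 1) :=
    (continuous_exp.comp continuous_mul_log).tendsto' 0 1 (by simp)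
  refine (h.mono_left nhdsWithin_le_nhds).congr' <| eventually_nhdsWithin_of_forall fun x hx => ?_
  simp only [rpow_def_of_pos hx, mul_comm]

theorem tendsto_const_sub_nhdsLT (p : ℝ) : Tendsto (fun q => p - q) (𝓝[<] p) (𝓝[>] 0) :=
  tendsto_nhdsWithin_iff.2
    ⟨by simpa using ((continuous_sub_left p).tendsto p).mono_left nhdsWithin_le_nhds,
      eventually_nhdsWithin_of_forall fun _ hq => sub_pos.2 (mem_Iio.1 hq)⟩

noncomputable def thresholdBound (lam1 p r q : ℝ) : ℝ :=
  lam1 ^ ((r - q) / (r - p)) * (r - p)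
    * ((p - q) ^ (p - q) / (r - q) ^ (r - q)) ^ ((1:ℝ) / (r - p))

section

variable {lam1 p r : ℝ}

theorem thresholdBound_self (hpr : p < r) : thresholdBound lam1 p r p = lam1 := by
  have hrp : 0 < r - p := sub_pos.2 hpr
  rw [thresholdBound, sub_self, rpow_zero, div_self hrp.ne', rpow_one, one_div, one_div,
    inv_rpow (by positivity), rpow_rpow_inv hrp.le hrp.ne', mul_inv_cancel_right₀ hrp.ne']

theorem continuousWithinAt_thresholdBound (hpr : p < r) :
    ContinuousWithinAt (thresholdBound lam1 p r) (Iio p) p := by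
  have hrp : 0 < r - p := sub_pos.2 hpr
  have hpow : ContinuousWithinAt (fun q : ℝ => (p - q) ^ (p - q)) (Iio p) p := by
    rw [ContinuousWithinAt, sub_self, rpow_zero]
    exact tendsto_rpow_self_nhdsGT_zero.comp (tendsto_const_sub_nhdsLT p)
  refine ((ContinuousAt.continuousWithinAt ?_).mul continuousWithinAt_const).mul
    ((hpow.div ?_ ?_).rpow_const (Or.inr (by positivity)))
  · exact continuousAt_const.rpow (by fun_prop) (by simp [hrp.ne'])
  · exact (ContinuousAt.rpow (by fun_prop) (by fun_prop) (by simp [hrp.ne'])).continuousWithinAt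
  · positivity

theorem tendsto_thresholdBound (hpr : p < r) :
    Tendsto (thresholdBound lam1 p r) (𝓝[<] p) (𝓝 lam1) := by
  have h := (continuousWithinAt_thresholdBound (lam1 := lam1) hpr).tendsto
  rwa [thresholdBound_self hpr] at h

end

theorem threshold_tendsto_general (p r lam1 : ℝ) (hpr : p < r)
    (Λ c : ℝ → ℝ) (hc : ∀ q ∈ Ioo (1:ℝ) p, 0 < c q)
    (hclim : Tendsto (fun q : ℝ => c q ^ (p - q)) (nhdsWithin p (Ioo 1 p)) (nhds 1))
    (hlow : ∀ q ∈ Ioo (1:ℝ) p,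
      lam1 ^ ((r - q) / (r - p)) * (r - p)
          * ((p - q) ^ (p - q) / (r - q) ^ (r - q)) ^ ((1:ℝ) / (r - p)) * c q ^ (q - p)
        ≤ Λ q)
    (hhigh : ∀ q ∈ Ioo (1:ℝ) p,
      Λ q ≤ lam1 ^ ((r - q) / (r - p)) * (r - p)
          * ((p - q) ^ (p - q) / (r - q) ^ (r - q)) ^ ((1:ℝ) / (r - p))) :
    Tendsto Λ (nhdsWithin p (Ioo 1 p)) (nhds lam1) := by
  have hupper : Tendsto (thresholdBound lam1 p r) (𝓝[Ioo 1 p] p) (𝓝 lam1) :=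
    (tendsto_thresholdBound hpr).mono_left (nhdsWithin_mono p Ioo_subset_Iio_self)
  have hfactor : Tendsto (fun q => c q ^ (q - p)) (𝓝[Ioo 1 p] p) (𝓝 1) := by
    have hinv : Tendsto (fun q => (c q ^ (p - q))⁻¹) (𝓝[Ioo 1 p] p) (𝓝 1) := by
      simpa using hclim.inv₀ one_ne_zero
    refine hinv.congr' <|
      eventually_nhdsWithin_of_forall fun q hq => ?_
    rw [← rpow_neg (hc q hq).le, neg_sub]
  have hlower := hupper.mul hfactor
  rw [mul_one] at hlower
  exact tendsto_of_tendsto_of_tendsto_of_le_of_le' hlower hupper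
    (eventually_nhdsWithin_of_forall hlow) (eventually_nhdsWithin_of_forall hhigh)

theorem threshold_tendsto (p r lam1 : ℝ) (hp : 1 < p) (hpr : p < r) (hlam : 0 < lam1)
    (Λ c : ℝ → ℝ) (hc : ∀ q ∈ Ioo (1:ℝ) p, 0 < c q)
    (hclim : Tendsto (fun q : ℝ => c q ^ (p - q)) (nhdsWithin p (Ioo 1 p)) (nhds 1))
    (hlow : ∀ q ∈ Ioo (1:ℝ) p,
      lam1 ^ ((r - q) / (r - p)) * (r - p)
          * ((p - q) ^ (p - q) / (r - q) ^ (r - q)) ^ ((1:ℝ) / (r - p)) * c q ^ (q - p)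
        ≤ Λ q)
    (hhigh : ∀ q ∈ Ioo (1:ℝ) p,
      Λ q ≤ lam1 ^ ((r - q) / (r - p)) * (r - p)
          * ((p - q) ^ (p - q) / (r - q) ^ (r - q)) ^ ((1:ℝ) / (r - p))) :
    Tendsto Λ (nhdsWithin p (Ioo 1 p)) (nhds lam1) :=
  threshold_tendsto_general p r lam1 hpr Λ c hc hclim hlow hhigh
end
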